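/- Let n ∈ ℕ and t1, t2, t4, z ∈ ℂ. Assume t1+t2, t1+t4, and t1+1−t4−n all lie outside {0, −1, …, −(n−1)}. Then (−1)^n · W_n(z; t1, t2, 1−t4−n, t4) = (t1+t2)_n · (t4+z)_n · (t4−z)_n = (t1+t2)_n · ∏_{j=1}^{n} [(t4+j−1)² − z²]; equivalently, in the variable x = −z², the monic Wilson polynomial (−1)^n W_n/(t1+t2)_n equals ∏_{j=1}^{n} [x + (t4+j−1)²]. -/

import Mathlib

/-!
With `t3 = 1 - t4 - n` the upper parameter `t1 + t2 + t3 + t4 + n - 1` of the Wilson sum equals the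
lower parameter `t1 + t2`, and what is left is the balanced series
`₃F₂(-n, t1 + z, t1 - z; t1 + t4, t1 + t3; 1)`, which the Pfaff–Saalschütz theorem evaluates.
Cleared of denominators, Pfaff–Saalschütz reads
`∑_{i+j=n} C(n,i) (a)_i (b)_i (c+i)_j (c-a-b)_j = (c-a)_n (c-b)_n`.
It follows by induction on `n`: the summands satisfy a Wilf–Zeilberger recurrence whose
certificate is `(a+k)(b+k)` times the summand, so summing it over `k` telescopes to
`S_{n+1} = (c-a+n)(c-b+n) S_n`.
-/

open Finset

/-- Pochhammer symbol `(a)_k = a (a+1) ⋯ (a+k-1)`. -/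
noncomputable def poch (a : ℂ) (k : ℕ) : ℂ := ∏ i ∈ Finset.range k, (a + i)

/-- The Wilson polynomial `W_n(z; t1,t2,t3,t4)` in the variable `z` (with `x = -z²`). -/
noncomputable def wilson (n : ℕ) (z t1 t2 t3 t4 : ℂ) : ℂ :=
  poch (t1 + t2) n * poch (t1 + t3) n * poch (t1 + t4) n *
    ∑ k ∈ Finset.range (n + 1),
      (poch (-(n : ℂ)) k * poch (t1 + t2 + t3 + t4 + (n : ℂ) - 1) k *
        poch (t1 + z) k * poch (t1 - z) k) /
      ((k.factorial : ℂ) * poch (t1 + t2) k * poch (t1 + t3) k * poch (t1 + t4) k)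

lemma poch_zero (a : ℂ) : poch a 0 = 1 := prod_range_zero _

lemma poch_succ (a : ℂ) (k : ℕ) : poch a (k + 1) = poch a k * (a + k) := prod_range_succ _ _

lemma poch_succ' (a : ℂ) (k : ℕ) : poch a (k + 1) = a * poch (a + 1) k := by
  rw [poch, prod_range_succ', mul_comm, Nat.cast_zero, add_zero, poch]
  congr 1
  exact prod_congr rfl fun i _ => by push_cast; ring

lemma poch_add (a : ℂ) (k m : ℕ) : poch a (k + m) = poch a k * poch (a + k) m := by
  rw [poch, prod_range_add, poch, poch]
  congr 1
  exact prod_congr rfl fun i _ => by push_cast; ring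

lemma poch_ne_zero {a : ℂ} {n : ℕ} (h : ∀ i : ℕ, i < n → a + i ≠ 0) : poch a n ≠ 0 :=
  prod_ne_zero_iff.2 fun i hi => h i (mem_range.1 hi)

lemma poch_ne_zero_of_le {a : ℂ} {k n : ℕ} (hkn : k ≤ n) (h : poch a n ≠ 0) :
    poch a k ≠ 0 := by
  rw [← Nat.add_sub_cancel' hkn, poch_add] at h
  exact left_ne_zero_of_mul h

lemma poch_neg_natCast (n k : ℕ) : poch (-n) k = (-1) ^ k * k.factorial * n.choose k := by
  induction k with
  | zero => simp [poch_zero]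
  | succ k ih =>
    rcases le_or_gt k n with hkn | hnk
    · have hpascal : (n.choose (k + 1) : ℂ) * (k + 1) = n.choose k * (n - k) := by
        have h := congrArg (Nat.cast (R := ℂ)) (Nat.choose_succ_right_eq n k)
        push_cast [Nat.cast_sub hkn] at h
        exact h
      rw [poch_succ, ih, Nat.factorial_succ]
      push_cast
      linear_combination (-1) ^ k * (k.factorial : ℂ) * hpascal
    · rw [poch_succ, ih, Nat.choose_eq_zero_of_lt hnk, Nat.choose_eq_zero_of_lt (by omega)]
      simp

lemma poch_eq_neg_one_pow_mul_poch (a : ℂ) (n : ℕ) :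
    poch a n = (-1) ^ n * poch (1 - a - n) n := by
  induction n generalizing a with
  | zero => simp [poch_zero]
  | succ n ih =>
    rw [poch_succ', ih, poch_succ]
    push_cast
    ring_nf

lemma poch_add_mul_poch_sub (a z : ℂ) (n : ℕ) :
    poch (a + z) n * poch (a - z) n = ∏ j ∈ range n, ((a + j) ^ 2 - z ^ 2) := by
  rw [poch, poch, ← prod_mul_distrib]
  exact prod_congr rfl fun j _ => by ring

noncomputable def saalschutzTerm (a b c : ℂ) (n k : ℕ) : ℂ :=
  n.choose k * (poch a k * poch b k) * (poch (c + k) (n - k) * poch (c - a - b) (n - k))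

lemma saalschutzTerm_of_lt {a b c : ℂ} {n k : ℕ} (h : n < k) :
    saalschutzTerm a b c n k = 0 := by
  simp [saalschutzTerm, Nat.choose_eq_zero_of_lt h]

lemma saalschutzTerm_succ_zero (a b c : ℂ) (n : ℕ) :
    saalschutzTerm a b c (n + 1) 0 = (c + n) * (c - a - b + n) * saalschutzTerm a b c n 0 := by
  simp only [saalschutzTerm, Nat.choose_zero_right, Nat.sub_zero, Nat.cast_zero, add_zero,
    poch_succ]
  ring

lemma saalschutzTerm_succ_succ (a b c : ℂ) {n k : ℕ} (hk : k ≤ n) :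
    saalschutzTerm a b c (n + 1) (k + 1) =
      (c - a + n) * (c - b + n) * saalschutzTerm a b c n (k + 1) +
        ((a + k) * (b + k) * saalschutzTerm a b c n k -
          (a + (k + 1 : ℕ)) * (b + (k + 1 : ℕ)) * saalschutzTerm a b c n (k + 1)) := by
  obtain rfl | hlt := hk.eq_or_lt
  · rw [saalschutzTerm_of_lt (Nat.lt_succ_self k)]
    simp only [saalschutzTerm, Nat.choose_self, Nat.sub_self, poch_zero, poch_succ]
    ring
  obtain ⟨m, rfl⟩ := Nat.exists_eq_add_of_lt hlt
  have hpascal : ((k + m + 1 + 1).choose (k + 1) : ℂ) =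
      (k + m + 1).choose k + (k + m + 1).choose (k + 1) := by
    exact_mod_cast Nat.choose_succ_succ' (k + m + 1) k
  have habsorb : ((k + m + 1).choose (k + 1) : ℂ) * (k + 1) = (k + m + 1).choose k * (m + 1) := by
    have h := congrArg (Nat.cast (R := ℂ)) (Nat.choose_succ_right_eq (k + m + 1) k)
    rw [show k + m + 1 - k = m + 1 by omega] at h
    push_cast at h
    exact h
  simp only [saalschutzTerm, show k + m + 1 + 1 - (k + 1) = m + 1 by omega,
    show k + m + 1 - (k + 1) = m by omega, show k + m + 1 - k = m + 1 by omega]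
  rw [poch_succ' (c + k) m, show c + (k : ℂ) + 1 = c + ((k + 1 : ℕ) : ℂ) by push_cast; ring,
    poch_succ a k, poch_succ b k, poch_succ (c + ((k + 1 : ℕ) : ℂ)) m, poch_succ (c - a - b) m,
    hpascal]
  push_cast
  linear_combination -(poch a k * (a + k) * (poch b k * (b + k)) * poch (c + (k + 1)) m *
    poch (c - a - b) m * (c - a - b + m)) * habsorb

theorem sum_saalschutzTerm (a b c : ℂ) (n : ℕ) :
    ∑ k ∈ range (n + 1), saalschutzTerm a b c n k = poch (c - a) n * poch (c - b) n := by
  induction n with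
  | zero => simp [saalschutzTerm, poch_zero]
  | succ n ih =>
    set g : ℕ → ℂ := fun k => (a + k) * (b + k) * saalschutzTerm a b c n k
    have hshift : ∑ k ∈ range (n + 1), saalschutzTerm a b c n (k + 1) =
        poch (c - a) n * poch (c - b) n - saalschutzTerm a b c n 0 := by
      rw [← ih, sum_range_succ (fun k => saalschutzTerm a b c n (k + 1)),
        saalschutzTerm_of_lt (Nat.lt_succ_self n), sum_range_succ' _ n]
      ring
    have hg : g (n + 1) = 0 := by simp only [g, saalschutzTerm_of_lt (Nat.lt_succ_self n), mul_zero]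
    calc ∑ k ∈ range (n + 1 + 1), saalschutzTerm a b c (n + 1) k
        = ∑ k ∈ range (n + 1), ((c - a + n) * (c - b + n) * saalschutzTerm a b c n (k + 1) +
            (g k - g (k + 1))) + saalschutzTerm a b c (n + 1) 0 := by
          rw [sum_range_succ']
          congr 1
          exact sum_congr rfl fun k hk =>
            saalschutzTerm_succ_succ a b c (Nat.lt_succ_iff.1 (mem_range.1 hk))
      _ = (c - a + n) * (c - b + n) * (poch (c - a) n * poch (c - b) n) := by
          rw [sum_add_distrib, ← mul_sum, sum_range_sub', hshift, hg, saalschutzTerm_succ_zero]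
          simp only [g, Nat.cast_zero, add_zero]
          ring
      _ = poch (c - a) (n + 1) * poch (c - b) (n + 1) := by rw [poch_succ, poch_succ]; ring

lemma poch_mul_poch_mul_summand_eq_saalschutzTerm {a b c d : ℂ} {n k : ℕ} (hk : k ≤ n)
    (hc : poch c k ≠ 0) (hd : poch d k ≠ 0) (hbal : c + d = a + b + 1 - n) :
    poch c n * poch d n *
        (poch (-n) k * poch a k * poch b k / (k.factorial * poch c k * poch d k)) =
      (-1) ^ n * saalschutzTerm a b c n k := by
  obtain ⟨m, rfl⟩ := Nat.exists_eq_add_of_le hk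
  have hreflect : poch (d + k) m = (-1) ^ m * poch (c - a - b) m := by
    rw [poch_eq_neg_one_pow_mul_poch,
      show 1 - (d + k) - m = c - a - b by push_cast at hbal; linear_combination -hbal]
  have hfac : (k.factorial : ℂ) ≠ 0 := Nat.cast_ne_zero.2 k.factorial_ne_zero
  rw [saalschutzTerm, Nat.add_sub_cancel_left, poch_add c, poch_add d, hreflect,
    poch_neg_natCast, pow_add]
  field_simp

theorem pfaff_saalschutz {a b c d : ℂ} {n : ℕ} (hc : poch c n ≠ 0) (hd : poch d n ≠ 0)
    (hbal : c + d = a + b + 1 - n) :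
    poch c n * poch d n * ∑ k ∈ range (n + 1),
        poch (-n) k * poch a k * poch b k / (k.factorial * poch c k * poch d k) =
      (-1) ^ n * (poch (c - a) n * poch (c - b) n) := by
  rw [mul_sum, ← sum_saalschutzTerm, mul_sum]
  refine sum_congr rfl fun k hk => ?_
  have hkn : k ≤ n := Nat.lt_succ_iff.1 (mem_range.1 hk)
  exact poch_mul_poch_mul_summand_eq_saalschutzTerm hkn (poch_ne_zero_of_le hkn hc)
    (poch_ne_zero_of_le hkn hd) hbal

theorem wilson_factorization_case2 (n : ℕ) (t1 t2 t4 z : ℂ)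
    (h12 : ∀ k : ℕ, k < n → t1 + t2 + k ≠ 0)
    (h14 : ∀ k : ℕ, k < n → t1 + t4 + k ≠ 0)
    (h13 : ∀ k : ℕ, k < n → t1 + 1 - t4 - (n : ℂ) + k ≠ 0) :
    (-1 : ℂ) ^ n * wilson n z t1 t2 (1 - t4 - (n : ℂ)) t4
        = poch (t1 + t2) n * (poch (t4 + z) n * poch (t4 - z) n) ∧
    poch (t1 + t2) n * (poch (t4 + z) n * poch (t4 - z) n)
        = poch (t1 + t2) n * ∏ j ∈ Finset.range n, ((t4 + j) ^ 2 - z ^ 2) := by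
  refine ⟨?_, by rw [poch_add_mul_poch_sub]⟩
  set t3 := 1 - t4 - (n : ℂ)
  have h2 : poch (t1 + t2) n ≠ 0 := poch_ne_zero h12
  have h3 : poch (t1 + t3) n ≠ 0 := poch_ne_zero fun k hk => by
    rw [show t1 + t3 + k = t1 + 1 - t4 - n + k by ring]
    exact h13 k hk
  have hwilson : wilson n z t1 t2 t3 t4 = poch (t1 + t2) n * (poch (t1 + t4) n * poch (t1 + t3) n *
      ∑ k ∈ range (n + 1), poch (-n) k * poch (t1 + z) k * poch (t1 - z) k /
        (k.factorial * poch (t1 + t4) k * poch (t1 + t3) k)) := by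
    rw [wilson, show t1 + t2 + t3 + t4 + n - 1 = t1 + t2 by ring]
    simp only [mul_sum]
    refine sum_congr rfl fun k hk => ?_
    have h2k := poch_ne_zero_of_le (Nat.lt_succ_iff.1 (mem_range.1 hk)) h2
    field_simp
  rw [hwilson, pfaff_saalschutz (poch_ne_zero h14) h3 (by ring),
    show t1 + t4 - (t1 + z) = t4 - z by ring, show t1 + t4 - (t1 - z) = t4 + z by ring]
  have hsign : (-1 : ℂ) ^ n * (-1) ^ n = 1 := by rw [← mul_pow]; norm_num
  linear_combination (poch (t1 + t2) n * poch (t4 + z) n * poch (t4 - z) n) * hsign
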